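/- Suppose (𝔟,𝔠,𝔡) ∈ (𝔯^×)³, 𝔞 = 𝔡 − 𝔟𝔠𝔡⁻¹, and a family (f_i)_{i∈I} ∈ (V*)^I satisfies (writing 𝔣_{i,α} = f_i(e_α)): (1) 𝔣_{i,α_j} = 0 for all i ≠ j; (6) 𝔡𝔣_{i,α} = 𝔟𝔣_{i,β} whenever m_{i,j} = 2 and α = s_j(β) with dep(α) = dep(β)+1; (8) 𝔠𝔣_{i,α} = 𝔟𝔣_{j,γ} − 𝔞𝔣_{i,β} whenever m_{i,j} = 3 and β = s_i(γ), α = s_j(β) with dep(γ) < dep(β) < dep(α); (10) 𝔡𝔣_{i,α} = 𝔟𝔣_{j,β} whenever m_{i,j} = 3 and γ, β = s_j(γ), α = s_i(β) ∈ Φ⁺ satisfy s_i(γ) = γ, s_j(α) = α and dep(γ) < dep(β) < dep(α). Then the family also satisfies relation (5): 𝔣_{i,α} = 𝔣_{j,α} whenever m_{i,j} = 3 and s_i(α) = s_j(α) = α. -/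

import Mathlib

set_option maxRecDepth 4000

namespace LK

/-! ### Coxeter matrices -/

/-- A Coxeter matrix on an index set `I` (entry `0` encodes `∞`). -/
structure CoxM (I : Type) where
  m : I → I → ℕ
  symm : ∀ i j, m i j = m j i
  one_iff : ∀ i j, m i j = 1 ↔ i = j

variable {I : Type}

/-- A Coxeter matrix is of small type if all its entries belong to `{1,2,3}`. -/
def CoxM.Small (M : CoxM I) : Prop := ∀ i j, M.m i j = 1 ∨ M.m i j = 2 ∨ M.m i j = 3

/-- The alternating word `i j i j ⋯` with `k` letters. -/
def braidList (k : ℕ) (i j : I) : List I :=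
  (List.range k).map (fun n => if n % 2 = 0 then i else j)

/-- The braid word `s_i s_j s_i ⋯` (`k` letters) in the free monoid. -/
def braidWord (k : ℕ) (i j : I) : FreeMonoid I := FreeMonoid.ofList (braidList k i j)

/-- The braid relations defining the Artin–Tits monoid. -/
def artinRel (M : CoxM I) : FreeMonoid I → FreeMonoid I → Prop :=
  fun x y => ∃ i j, M.m i j ≠ 0 ∧ x = braidWord (M.m i j) i j ∧ y = braidWord (M.m i j) j i

/-- The congruence on the free monoid generated by the braid relations. -/
def artinCon (M : CoxM I) : Con (FreeMonoid I) := conGen (artinRel M)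

/-- The Artin–Tits monoid `B⁺` of a Coxeter matrix. -/
def AM (M : CoxM I) := (artinCon M).Quotient

instance (M : CoxM I) : Monoid (AM M) := inferInstanceAs (Monoid (artinCon M).Quotient)

/-- The standard generators of the Artin–Tits monoid. -/
def gen (M : CoxM I) (i : I) : AM M := (artinCon M).mk' (FreeMonoid.of i)

/-- `I(b) = {i ∈ I ∣ s_i ≼ b}`, where `≼` is left divisibility. -/
def IdxSet (M : CoxM I) (x : AM M) : Set I := {i | gen M i ∣ x}

/-- The braid word `s_i s_j s_i ⋯` (`k` letters) in the free group. -/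
def braidWordG (k : ℕ) (i j : I) : FreeGroup I := ((braidList k i j).map FreeGroup.of).prod

/-- The braid relators defining the Artin–Tits group. -/
def artinGRels (M : CoxM I) : Set (FreeGroup I) :=
  {r | ∃ i j, M.m i j ≠ 0 ∧ r = braidWordG (M.m i j) i j * (braidWordG (M.m i j) j i)⁻¹}

/-- The Artin–Tits group `B` of a Coxeter matrix. -/
def AG (M : CoxM I) := PresentedGroup (artinGRels M)

instance (M : CoxM I) : Group (AG M) := inferInstanceAs (Group (PresentedGroup _))

/-- The standard generators of the Artin–Tits group. -/
def ggen (M : CoxM I) (i : I) : AG M := PresentedGroup.of i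

/-- The relators defining the Coxeter group. -/
def coxRels (M : CoxM I) : Set (FreeGroup I) :=
  {r | ∃ i j, M.m i j ≠ 0 ∧ r = (FreeGroup.of i * FreeGroup.of j) ^ (M.m i j)}

/-- The Coxeter group `W` of a Coxeter matrix. -/
def CoxG (M : CoxM I) := PresentedGroup (coxRels M)

instance (M : CoxM I) : Group (CoxG M) := inferInstanceAs (Group (PresentedGroup _))

/-- A Coxeter matrix is spherical if its Coxeter group is finite. -/
def Spherical (M : CoxM I) : Prop := Finite (CoxG M)

/-- Connectedness of the Coxeter graph: there is an edge between `i` and `j`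
iff `m i j ∉ {1,2}`. -/
def Connected (M : CoxM I) : Prop :=
  ∀ i j : I, Relation.ReflTransGen (fun a b => M.m a b ≠ 1 ∧ M.m a b ≠ 2) i j

/-- Restriction of a Coxeter matrix to a subset of the index set. -/
def CoxM.restrictF [DecidableEq I] (M : CoxM I) (J : Finset I) : CoxM {i // i ∈ J} :=
  ⟨fun i j => M.m i j, fun i j => M.symm i j,
   fun i j => (M.one_iff i j).trans (by exact Subtype.coe_inj)⟩

/-- An irreducible affine Coxeter matrix: connected, non-spherical, but every proper
parabolic submatrix is spherical. -/
def Affine [Fintype I] [DecidableEq I] (M : CoxM I) : Prop :=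
  Connected M ∧ ¬ Spherical M ∧ ∀ J : Finset I, J ≠ Finset.univ → Spherical (M.restrictF J)

/-! ### The standard root system -/

section Roots

variable [Fintype I] [DecidableEq I]

/-- The coefficients `-2 cos (π / m i j)` of the standard bilinear form. -/
noncomputable def cf (M : CoxM I) (i j : I) : ℝ := -2 * Real.cos (Real.pi / (M.m i j : ℝ))

/-- The standard symmetric bilinear form `( · | · )` on `E = ⊕ ℝ α_i`. -/
noncomputable def bform (M : CoxM I) (x y : I → ℝ) : ℝ := ∑ i, ∑ j, x i * y j * cf M i j

/-- The simple root `α_i`. -/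
def sroot (i : I) : I → ℝ := Pi.single i 1

/-- The simple reflection `s_i` acting on `E`. -/
noncomputable def srefl (M : CoxM I) (i : I) (v : I → ℝ) : I → ℝ :=
  v - bform M v (sroot i) • sroot i

/-- The roots: the orbit of the simple roots under the reflections. -/
inductive IsRoot (M : CoxM I) : (I → ℝ) → Prop
  | simple (i : I) : IsRoot M (sroot i)
  | srefl (i : I) (v : I → ℝ) : IsRoot M v → IsRoot M (LK.srefl M i v)

/-- The positive roots: roots with nonnegative coordinates. -/
def IsPos (M : CoxM I) (v : I → ℝ) : Prop := IsRoot M v ∧ ∀ i, 0 ≤ v i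

/-- The set `Φ⁺` of positive roots, as a type. -/
def Pos (M : CoxM I) := {v : I → ℝ // IsPos M v}

/-- The depth of a positive root: the least number of simple reflections needed to
send it to a negative vector. -/
noncomputable def dep (M : CoxM I) (v : I → ℝ) : ℕ :=
  sInf {n | ∃ l : List I, l.length = n ∧ ∃ k, l.foldr (srefl M) v k < 0}

theorem isPos_sroot (M : CoxM I) (i : I) : IsPos M (sroot i) :=
  ⟨IsRoot.simple i, fun j => by rw [sroot, Pi.single_apply]; split <;> norm_num⟩

/-- The simple root `α_i` as a positive root. -/
def simplePos (M : CoxM I) (i : I) : Pos M := ⟨sroot i, isPos_sroot M i⟩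

/-! ### The Lawrence–Krammer representation -/

variable (M : CoxM I) (R : Type) [CommRing R]

/-- The free module `V` with basis `(e_α)` indexed by the positive roots. -/
abbrev VV := Pos M →₀ R

/-- The basis vector `e_α` of `V`. -/
noncomputable def ev (α : Pos M) : VV M R := Finsupp.single α 1

open scoped Classical in
/-- The value of the map `φ_i` on the basis vector indexed by `α`. -/
noncomputable def phiAux (a b c d : R) (i : I) (α : Pos M) : VV M R :=
  if α.1 = sroot i then 0
  else if srefl M i α.1 = α.1 then d • ev M R α
  else if h : IsPos M (srefl M i α.1) then
    if dep M α.1 < dep M (srefl M i α.1) then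
      a • ev M R α + c • ev M R ⟨srefl M i α.1, h⟩
    else b • ev M R ⟨srefl M i α.1, h⟩
  else 0

/-- The linear map `φ_i : V → V`. -/
noncomputable def phi (a b c d : R) (i : I) : VV M R →ₗ[R] VV M R :=
  Finsupp.lift (VV M R) R (Pos M) (phiAux M R a b c d i)

/-- The linear map `ψ_i = φ_i + f_i ⊠ e_{α_i}`. -/
noncomputable def psim (a b c d : R) (f : I → (VV M R →ₗ[R] R)) (i : I) :
    VV M R →ₗ[R] VV M R :=
  phi M R a b c d i + (f i).smulRight (ev M R (simplePos M i))

/-- LK-families. -/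
structure IsLK (a b c d : R) (f : I → (VV M R →ₗ[R] R)) : Prop where
  diag : ∀ i j, i ≠ j → f i (ev M R (simplePos M j)) = 0
  rel2 : ∀ i j, M.m i j = 2 → (f i).comp (phi M R a b c d j) = d • f i
  rel3 : ∀ i j, M.m i j = 3 →
    (f i).comp (phi M R a b c d j) = (f j).comp (phi M R a b c d i)

/-- The `R`-module `𝓕` of LK-families. -/
noncomputable def LKFamilies (a b c d : R) : Submodule R (I → (VV M R →ₗ[R] R)) where
  carrier := {f | IsLK M R a b c d f}
  add_mem' := by
    rintro f g ⟨hf1, hf2, hf3⟩ ⟨hg1, hg2, hg3⟩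
    refine ⟨fun i j hij => ?_, fun i j hij => ?_, fun i j hij => ?_⟩
    · rw [Pi.add_apply, LinearMap.add_apply, hf1 i j hij, hg1 i j hij, add_zero]
    · simp only [Pi.add_apply, LinearMap.add_comp, hf2 i j hij, hg2 i j hij, smul_add]
    · simp only [Pi.add_apply, LinearMap.add_comp, hf3 i j hij, hg3 i j hij]
  zero_mem' := by
    refine ⟨fun i j hij => ?_, fun i j hij => ?_, fun i j hij => ?_⟩
    · rw [Pi.zero_apply, LinearMap.zero_apply]
    · simp only [Pi.zero_apply, LinearMap.zero_comp, smul_zero]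
    · simp only [Pi.zero_apply, LinearMap.zero_comp]
  smul_mem' := by
    rintro r f ⟨h1, h2, h3⟩
    refine ⟨fun i j hij => ?_, fun i j hij => ?_, fun i j hij => ?_⟩
    · rw [Pi.smul_apply, LinearMap.smul_apply, h1 i j hij, smul_zero]
    · rw [Pi.smul_apply, LinearMap.smul_comp, h2 i j hij]; exact smul_comm r d (f i)
    · simp only [Pi.smul_apply, LinearMap.smul_comp, h3 i j hij]

end Roots

/-! ### The monoid of binary relations -/

/-- The monoid of binary relations on a set `Ω`, where `β (R * S) α ↔ ∃ γ, β R γ ∧ γ S α`. -/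
def Bin (Ω : Type) := Ω → Ω → Prop

instance (Ω : Type) : Monoid (Bin Ω) where
  mul T S := fun x z => ∃ y, T x y ∧ S y z
  one := fun x y => x = y
  mul_assoc T S U := by
    funext x z
    apply propext
    constructor
    · rintro ⟨y, ⟨u, hTu, hSu⟩, hU⟩; exact ⟨u, hTu, y, hSu, hU⟩
    · rintro ⟨u, hT, y, hS, hU⟩; exact ⟨y, ⟨u, hT, hS⟩, hU⟩
  one_mul T := by
    funext x z
    apply propext
    constructor
    · rintro ⟨y, rfl, h⟩; exact h
    · intro h; exact ⟨x, rfl, h⟩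
  mul_one T := by
    funext x z
    apply propext
    constructor
    · rintro ⟨y, h, rfl⟩; exact h
    · intro h; exact ⟨z, h, rfl⟩

/-- `R(Ψ) = {β ∈ Ω ∣ ∃ α ∈ Ψ, β R α}`. -/
def Bin.image {Ω : Type} (T : Bin Ω) (Ψ : Set Ω) : Set Ω := {x | ∃ y ∈ Ψ, T x y}

/-! ### Further constructions -/

section More

variable [Fintype I] [DecidableEq I]

/-- The map `μ : 𝓕 → 𝔯` in the spherical case. -/
noncomputable def muSph (M : CoxM I) (R : Type) [CommRing R] (a b c d : R) (i0 : I) :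
    LKFamilies M R a b c d →ₗ[R] R where
  toFun f := f.1 i0 (ev M R (simplePos M i0))
  map_add' f g := rfl
  map_smul' r f := rfl

/-- A graph automorphism of a Coxeter matrix. -/
def IsAut (M : CoxM I) (g : Equiv.Perm I) : Prop := ∀ i j, M.m (g i) (g j) = M.m i j

/-- The action of a permutation of `I` on `E = ⊕ ℝ α_i`, sending `α_i` to `α_{g(i)}`. -/
def permE (g : Equiv.Perm I) (v : I → ℝ) : I → ℝ := fun i => v (g.symm i)

open scoped Classical in
/-- The element of `Φ⁺` with given coordinates (junk value if the vector is not
a positive root). -/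
noncomputable def posOf (M : CoxM I) [Nonempty I] (v : I → ℝ) : Pos M :=
  if h : IsPos M v then ⟨v, h⟩ else simplePos M (Classical.arbitrary I)

/-- The action of a permutation of `I` on `Φ⁺`. -/
noncomputable def permPos (M : CoxM I) [Nonempty I] (g : Equiv.Perm I) (α : Pos M) : Pos M :=
  posOf M (permE g α.1)

/-- The action of a permutation of `I` on `V`, permuting the basis `(e_α)`. -/
noncomputable def permV (M : CoxM I) (R : Type) [CommRing R] [Nonempty I] (g : Equiv.Perm I) :
    VV M R →ₗ[R] VV M R :=
  Finsupp.lmapDomain R R (permPos M g)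

/-- The submodule `V^G` of fixed points of `V` under a group `G` of permutations of `I`. -/
noncomputable def fixedV (M : CoxM I) (R : Type) [CommRing R] [Nonempty I]
    (G : Subgroup (Equiv.Perm I)) : Submodule R (VV M R) where
  carrier := {v | ∀ g ∈ G, permV M R g v = v}
  add_mem' hx hy g hg := by rw [map_add, hx g hg, hy g hg]
  zero_mem' g hg := map_zero _
  smul_mem' r v hv g hg := by rw [map_smul, hv g hg]

/-- The submonoid `(B⁺)^G` of fixed points of the Artin–Tits monoid under a group `G`
of permutations of `I` (acting via `actB`). -/
def fixedB (M : CoxM I) (actB : Equiv.Perm I → (AM M →* AM M))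
    (G : Subgroup (Equiv.Perm I)) : Submonoid (AM M) where
  carrier := {x | ∀ g ∈ G, actB g x = x}
  one_mem' g hg := map_one _
  mul_mem' hx hy g hg := by rw [map_mul, hx g hg, hy g hg]

/-- The map `μ : 𝓕 → 𝔯^ℕ` in the affine case, defined from the data of the imaginary
root `δ` and of a pair `(i0, j0)` with `m i0 j0 = 3`. -/
noncomputable def muAff (M : CoxM I) (R : Type) [CommRing R] [Nonempty I] (b c d : R)
    (δ : I → ℝ) (i0 j0 : I) (f : I → (VV M R →ₗ[R] R)) : ℕ → R := fun n =>
  if n % 2 = 0 then f i0 (ev M R (posOf M ((n / 2 : ℕ) • δ + sroot i0)))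
  else
    c * d * f i0 (ev M R (posOf M (((n + 1) / 2 : ℕ) • δ - sroot i0)))
      - b * c * f i0 (ev M R (posOf M (((n + 1) / 2 : ℕ) • δ - sroot i0 - sroot j0)))
      - d * d * f j0 (ev M R (posOf M (((n + 1) / 2 : ℕ) • δ - sroot i0 - sroot j0)))

end More

end LK

/-!
Induction on the depth of `α`. Since `(α | α) = 2` and `α ≥ 0`, some simple root has
`(α | α_k) > 0`; then `k ∉ {i, j}` and `s_k` lowers the depth by exactly one. If `α = α_k`,
relation (1) kills both sides. If `m_{ik} = m_{jk} = 2`, relation (6) moves both sides to `s_k α`,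
where the induction hypothesis applies. If `m_{ik} = 3` and `m_{jk} = 2` (or symmetrically), the
roots `β = s_k α`, `γ = s_i β`, `δ = s_j γ` descend by one each, `δ` is fixed by `s_i` and `s_k`,
and relations (6), (8), (10) along this hexagon together with the induction hypothesis
`f_i(δ) = f_k(δ)` give `c d f_i(α) = c d f_j(α)`. The case `m_{ik} = m_{jk} = 3` cannot occur:
for a triangle `i, j, k` the pairing with `α_i + α_j + α_k` is `≤ 0` on positive roots, but here
it equals `(α | α_k) > 0`.

That `s_k` lowers the depth when `(v | α_k) > 0` rests on Tits' lemma (`w α_i ≥ 0` whenever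
`ℓ(w s_i) > ℓ(w)`), which for small type follows by induction on `ℓ(w)` from the dihedral
relations `m ∈ {2, 3}`.
-/

namespace LK

section CoxeterMatrix

variable {I : Type} {M : CoxM I}

variable (M) in
theorem CoxM.m_self (i : I) : M.m i i = 1 := (M.one_iff i i).2 rfl

theorem CoxM.m_eq_two_or_three (hs : M.Small) {i j : I} (h : i ≠ j) :
    M.m i j = 2 ∨ M.m i j = 3 :=
  (hs i j).resolve_left fun h1 => h ((M.one_iff i j).1 h1)

theorem cf_self (i : I) : cf M i i = 2 := by
  simp [cf, CoxM.m_self, Real.cos_pi]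

theorem cf_of_m_eq_two {i j : I} (h : M.m i j = 2) : cf M i j = 0 := by
  norm_num [cf, h, Real.cos_pi_div_two]

theorem cf_of_m_eq_three {i j : I} (h : M.m i j = 3) : cf M i j = -1 := by
  norm_num [cf, h, Real.cos_pi_div_three]

theorem cf_comm (i j : I) : cf M i j = cf M j i := by
  rw [cf, cf, M.symm]

variable (M) in
def CoxM.toCoxeterMatrix : CoxeterMatrix I where
  M := Matrix.of M.m
  isSymm := by ext i j; exact M.symm j i
  diagonal := M.m_self
  off_diagonal i j hij h1 := hij ((M.one_iff i j).1 h1)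

variable (M) in
abbrev CoxM.W := M.toCoxeterMatrix.Group

variable (M) in
abbrev cs : CoxeterSystem M.toCoxeterMatrix M.W := M.toCoxeterMatrix.toCoxeterSystem

theorem simple_mul_comm_of_m_eq_two {i j : I} (h : M.m i j = 2) :
    (cs M).simple i * (cs M).simple j = (cs M).simple j * (cs M).simple i := by
  have hp := (cs M).simple_mul_simple_pow i j
  rw [show M.toCoxeterMatrix i j = 2 from h, sq] at hp
  calc (cs M).simple i * (cs M).simple j
      = (cs M).simple i * (cs M).simple j * ((cs M).simple i * (cs M).simple j) *
          ((cs M).simple j * (cs M).simple i) := by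
        simp only [← mul_assoc, CoxeterSystem.simple_mul_simple_cancel_right]
    _ = _ := by rw [hp, one_mul]

theorem simple_braid_of_m_eq_three {i j : I} (h : M.m i j = 3) :
    (cs M).simple i * (cs M).simple j * (cs M).simple i
      = (cs M).simple j * (cs M).simple i * (cs M).simple j := by
  have hp := (cs M).simple_mul_simple_pow i j
  rw [show M.toCoxeterMatrix i j = 3 from h, pow_succ, sq] at hp
  calc (cs M).simple i * (cs M).simple j * (cs M).simple i
      = (cs M).simple i * (cs M).simple j * ((cs M).simple i * (cs M).simple j) *
          ((cs M).simple i * (cs M).simple j) *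
          ((cs M).simple j * (cs M).simple i * (cs M).simple j) := by
        simp only [← mul_assoc, CoxeterSystem.simple_mul_simple_cancel_right]
    _ = _ := by rw [hp, one_mul]

theorem length_mul_simple_le (w : M.W) (i : I) :
    (cs M).length (w * (cs M).simple i) ≤ (cs M).length w + 1 := by
  rcases (cs M).length_mul_simple w i with h | h <;> omega

theorem isRightDescent_mul_simple_iff (x : M.W) (j : I) :
    (cs M).IsRightDescent (x * (cs M).simple j) j ↔
      (cs M).length x < (cs M).length (x * (cs M).simple j) := by
  rw [CoxeterSystem.IsRightDescent, CoxeterSystem.simple_mul_simple_cancel_right]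

end CoxeterMatrix

section Form

variable {I : Type} [Fintype I] {M : CoxM I}

theorem bform_comm (x y : I → ℝ) : bform M x y = bform M y x := by
  rw [bform, bform, Finset.sum_comm]
  refine Finset.sum_congr rfl fun i _ => Finset.sum_congr rfl fun j _ => ?_
  rw [cf_comm]; ring

theorem bform_add_left (x x' y : I → ℝ) : bform M (x + x') y = bform M x y + bform M x' y := by
  simp only [bform, Pi.add_apply, add_mul, Finset.sum_add_distrib]

theorem bform_sub_left (x x' y : I → ℝ) : bform M (x - x') y = bform M x y - bform M x' y := by
  simp only [bform, Pi.sub_apply, sub_mul, Finset.sum_sub_distrib]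

theorem bform_smul_left (t : ℝ) (x y : I → ℝ) : bform M (t • x) y = t * bform M x y := by
  simp only [bform, Pi.smul_apply, smul_eq_mul, Finset.mul_sum, mul_assoc]

theorem bform_add_right (x y y' : I → ℝ) : bform M x (y + y') = bform M x y + bform M x y' := by
  rw [bform_comm, bform_add_left, bform_comm y, bform_comm y']

theorem bform_sub_right (x y y' : I → ℝ) : bform M x (y - y') = bform M x y - bform M x y' := by
  rw [bform_comm, bform_sub_left, bform_comm y, bform_comm y']

theorem bform_smul_right (t : ℝ) (x y : I → ℝ) : bform M x (t • y) = t * bform M x y := by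
  rw [bform_comm, bform_smul_left, bform_comm]

end Form

section SimpleRoots

variable {I : Type} [DecidableEq I]

theorem sroot_ne_zero (i : I) : sroot i ≠ (0 : I → ℝ) :=
  fun h => by simpa [sroot] using congrFun h i

theorem sroot_nonneg (i : I) : 0 ≤ (sroot i : I → ℝ) :=
  Pi.single_nonneg.2 zero_le_one

theorem not_nonneg_neg_sroot (i : I) : ¬ 0 ≤ -(sroot i : I → ℝ) :=
  fun h => absurd (h i) (by simp [sroot])

variable [Fintype I] {M : CoxM I}

theorem bform_sroot_right (x : I → ℝ) (k : I) : bform M x (sroot k) = ∑ l, x l * cf M l k := by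
  simp [bform, sroot, Pi.single_apply]

theorem bform_sroot_sroot (i j : I) : bform M (sroot i) (sroot j) = cf M i j := by
  rw [bform_sroot_right]; simp [sroot, Pi.single_apply]

theorem bform_eq_sum_bform_sroot (x y : I → ℝ) :
    bform M x y = ∑ k, y k * bform M x (sroot k) := by
  simp only [bform_sroot_right, Finset.mul_sum]
  rw [bform, Finset.sum_comm]
  refine Finset.sum_congr rfl fun i _ => Finset.sum_congr rfl fun j _ => ?_
  ring

theorem srefl_def (M : CoxM I) (i : I) (v : I → ℝ) :
    srefl M i v = v - bform M v (sroot i) • sroot i := rfl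

theorem srefl_apply_of_ne {i l : I} (v : I → ℝ) (h : l ≠ i) : srefl M i v l = v l := by
  simp [srefl, sroot, h]

theorem bform_srefl_left (i : I) (v y : I → ℝ) :
    bform M (srefl M i v) y = bform M v y - bform M v (sroot i) * bform M (sroot i) y := by
  rw [srefl, bform_sub_left, bform_smul_left]

theorem bform_srefl_sroot_self (i : I) (v : I → ℝ) :
    bform M (srefl M i v) (sroot i) = -bform M v (sroot i) := by
  rw [bform_srefl_left, bform_sroot_sroot, cf_self]; ring

theorem srefl_eq_self_iff {i : I} {v : I → ℝ} : srefl M i v = v ↔ bform M v (sroot i) = 0 := by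
  rw [srefl, sub_eq_self, smul_eq_zero, or_iff_left (sroot_ne_zero i)]

theorem srefl_sroot_self (i : I) : srefl M i (sroot i) = -sroot i := by
  rw [srefl, bform_sroot_sroot, cf_self]; module

theorem srefl_srefl (i : I) (v : I → ℝ) : srefl M i (srefl M i v) = v := by
  rw [srefl_def M i (srefl M i v), bform_srefl_sroot_self, srefl]; module

theorem bform_srefl_srefl (i : I) (u v : I → ℝ) :
    bform M (srefl M i u) (srefl M i v) = bform M u v := by
  rw [srefl_def M i v, bform_sub_right, bform_smul_right, bform_srefl_left, bform_srefl_left,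
    bform_sroot_sroot, cf_self, bform_comm (sroot i) v]
  ring

theorem srefl_comm_of_m_eq_two {i j : I} (h : M.m i j = 2) (v : I → ℝ) :
    srefl M i (srefl M j v) = srefl M j (srefl M i v) := by
  have hij := cf_of_m_eq_two h
  have hji : cf M j i = 0 := cf_comm i j ▸ hij
  simp only [srefl_def, bform_sub_left, bform_smul_left, bform_sroot_sroot, hij, hji]
  module

theorem srefl_braid_of_m_eq_three {i j : I} (h : M.m i j = 3) (v : I → ℝ) :
    srefl M i (srefl M j (srefl M i v)) = srefl M j (srefl M i (srefl M j v)) := by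
  have hij := cf_of_m_eq_three h
  have hji : cf M j i = -1 := cf_comm i j ▸ hij
  simp only [srefl_def, bform_sub_left, bform_smul_left, bform_sroot_sroot, cf_self, hij, hji]
  module

end SimpleRoots

section GeometricRepresentation

variable {I : Type} [Fintype I] [DecidableEq I] {M : CoxM I}

variable (M) in
noncomputable def sreflLin (i : I) : Module.End ℝ (I → ℝ) where
  toFun := srefl M i
  map_add' u v := by simp only [srefl_def, bform_add_left]; module
  map_smul' t v := by simp only [srefl_def, bform_smul_left, RingHom.id_apply]; module

theorem sreflLin_apply (i : I) (v : I → ℝ) : sreflLin M i v = srefl M i v := rfl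

theorem isLiftable_sreflLin (hs : M.Small) : M.toCoxeterMatrix.IsLiftable (sreflLin M) := by
  intro i j
  change (sreflLin M i * sreflLin M j) ^ M.m i j = 1
  rcases hs i j with h | h | h <;> rw [h] <;> refine LinearMap.ext fun v => ?_ <;>
    simp only [pow_succ, pow_zero, one_mul, Module.End.mul_apply, Module.End.one_apply,
      sreflLin_apply]
  · rw [(M.one_iff i j).1 h, srefl_srefl]
  · rw [srefl_comm_of_m_eq_two h (srefl M i _), srefl_srefl, srefl_srefl]
  · rw [← srefl_braid_of_m_eq_three h, srefl_srefl, srefl_srefl, srefl_srefl]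

variable (M) in
noncomputable def geomRep (hs : M.Small) : M.W →* Module.End ℝ (I → ℝ) :=
  (cs M).lift ⟨sreflLin M, isLiftable_sreflLin hs⟩

theorem geomRep_simple (hs : M.Small) (i : I) (v : I → ℝ) :
    geomRep M hs ((cs M).simple i) v = srefl M i v := by
  rw [geomRep, CoxeterSystem.lift_apply_simple, sreflLin_apply]

theorem geomRep_mul_simple (hs : M.Small) (w : M.W) (i : I) (v : I → ℝ) :
    geomRep M hs (w * (cs M).simple i) v = geomRep M hs w (srefl M i v) := by
  rw [map_mul, Module.End.mul_apply, geomRep_simple]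

theorem geomRep_simple_mul (hs : M.Small) (w : M.W) (i : I) (v : I → ℝ) :
    geomRep M hs ((cs M).simple i * w) v = srefl M i (geomRep M hs w v) := by
  rw [map_mul, Module.End.mul_apply, geomRep_simple]

theorem srefl_sroot_of_m_eq_two {i j : I} (h : M.m i j = 2) : srefl M j (sroot i) = sroot i :=
  srefl_eq_self_iff.2 (by rw [bform_sroot_sroot, cf_of_m_eq_two h])

theorem srefl_sroot_of_m_eq_three {i j : I} (h : M.m i j = 3) :
    srefl M j (sroot i) = sroot i + sroot j := by
  rw [srefl_def, bform_sroot_sroot, cf_of_m_eq_three h]; module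

theorem srefl_srefl_sroot_of_m_eq_three {i j : I} (h : M.m i j = 3) :
    srefl M i (srefl M j (sroot i)) = sroot j := by
  rw [srefl_sroot_of_m_eq_three h, srefl_def, bform_add_left, bform_sroot_sroot,
    bform_sroot_sroot, cf_self, cf_comm, cf_of_m_eq_three h]
  module

theorem geomRep_sroot_nonneg_of_m_eq_two (hs : M.Small) {x : M.W} {i j : I} (h : M.m i j = 2)
    (hj : (cs M).IsRightDescent (x * (cs M).simple j) j)
    (hi : ¬ (cs M).IsRightDescent (x * (cs M).simple j) i)
    (ih : ∀ y : M.W, (cs M).length y < (cs M).length (x * (cs M).simple j) → ∀ k,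
      ¬ (cs M).IsRightDescent y k → 0 ≤ geomRep M hs y (sroot k)) :
    0 ≤ geomRep M hs (x * (cs M).simple j) (sroot i) := by
  rw [isRightDescent_mul_simple_iff] at hj
  rw [geomRep_mul_simple, srefl_sroot_of_m_eq_two h]
  refine ih x hj i fun hxi => hi ?_
  have hle := length_mul_simple_le (x * (cs M).simple i) j
  rw [mul_assoc, simple_mul_comm_of_m_eq_two h, ← mul_assoc] at hle
  exact lt_of_le_of_lt hle (by unfold CoxeterSystem.IsRightDescent at hxi; omega)

theorem geomRep_sroot_nonneg_of_m_eq_three (hs : M.Small) {x : M.W} {i j : I} (h : M.m i j = 3)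
    (hj : (cs M).IsRightDescent (x * (cs M).simple j) j)
    (hi : ¬ (cs M).IsRightDescent (x * (cs M).simple j) i)
    (ih : ∀ y : M.W, (cs M).length y < (cs M).length (x * (cs M).simple j) → ∀ k,
      ¬ (cs M).IsRightDescent y k → 0 ≤ geomRep M hs y (sroot k)) :
    0 ≤ geomRep M hs (x * (cs M).simple j) (sroot i) := by
  rw [isRightDescent_mul_simple_iff] at hj
  have hxj : ¬ (cs M).IsRightDescent x j := by
    rw [CoxeterSystem.IsRightDescent]; omega
  by_cases hxi : (cs M).IsRightDescent x i
  · obtain ⟨y, rfl⟩ : ∃ y, x = y * (cs M).simple i :=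
      ⟨x * (cs M).simple i, (CoxeterSystem.simple_mul_simple_cancel_right _ i).symm⟩
    rw [isRightDescent_mul_simple_iff] at hxi
    rw [geomRep_mul_simple, geomRep_mul_simple, srefl_srefl_sroot_of_m_eq_three h]
    refine ih y (hxi.trans hj) j fun hyj => hi ?_
    have h1 := length_mul_simple_le (y * (cs M).simple j) i
    have h2 := length_mul_simple_le (y * (cs M).simple j * (cs M).simple i) j
    rw [mul_assoc (y * _), mul_assoc y, ← mul_assoc ((cs M).simple j),
      ← simple_braid_of_m_eq_three h] at h2
    simp only [← mul_assoc] at h2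
    unfold CoxeterSystem.IsRightDescent at hyj ⊢
    omega
  · rw [geomRep_mul_simple, srefl_sroot_of_m_eq_three h, map_add]
    exact add_nonneg (ih x hj i hxi) (ih x hj j hxj)

theorem geomRep_sroot_nonneg (hs : M.Small) {w : M.W} {i : I} (hi : ¬ (cs M).IsRightDescent w i) :
    0 ≤ geomRep M hs w (sroot i) := by
  induction h : (cs M).length w using Nat.strong_induction_on generalizing w i with
  | _ n ih =>
  subst h
  by_cases hw : w = 1
  · rw [hw, map_one, Module.End.one_apply]; exact sroot_nonneg i
  obtain ⟨j, hj⟩ := (cs M).exists_rightDescent_of_ne_one hw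
  have hij : i ≠ j := by rintro rfl; exact hi hj
  obtain ⟨x, rfl⟩ : ∃ x, w = x * (cs M).simple j :=
    ⟨w * (cs M).simple j, (CoxeterSystem.simple_mul_simple_cancel_right _ j).symm⟩
  have ih' : ∀ y : M.W, (cs M).length y < (cs M).length (x * (cs M).simple j) → ∀ k,
      ¬ (cs M).IsRightDescent y k → 0 ≤ geomRep M hs y (sroot k) :=
    fun y hy _ hk => ih _ hy hk rfl
  rcases M.m_eq_two_or_three hs hij with h | h
  · exact geomRep_sroot_nonneg_of_m_eq_two hs h hj hi ih'
  · exact geomRep_sroot_nonneg_of_m_eq_three hs h hj hi ih'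

end GeometricRepresentation

theorem not_nonneg_iff {I : Type} {v : I → ℝ} : ¬ 0 ≤ v ↔ ∃ l, v l < 0 := by
  simp [Pi.le_def]

section Roots

variable {I : Type} [Fintype I] [DecidableEq I] {M : CoxM I} {v : I → ℝ}

theorem IsRoot.geomRep_apply (hs : M.Small) (hv : IsRoot M v) (w : M.W) :
    IsRoot M (geomRep M hs w v) := by
  induction w using (cs M).simple_induction_left with
  | one => rwa [map_one, Module.End.one_apply]
  | mul_simple_left w i ih => rw [geomRep_simple_mul]; exact ih.srefl i _

theorem IsRoot.exists_geomRep_sroot_eq (hs : M.Small) (hv : IsRoot M v) :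
    ∃ (w : M.W) (k : I), geomRep M hs w (sroot k) = v := by
  induction hv with
  | simple i => exact ⟨1, i, by rw [map_one, Module.End.one_apply]⟩
  | srefl i u _ ih =>
    obtain ⟨w, k, rfl⟩ := ih
    exact ⟨(cs M).simple i * w, k, geomRep_simple_mul hs w i _⟩

theorem IsRoot.bform_self (hv : IsRoot M v) : bform M v v = 2 := by
  induction hv with
  | simple i => rw [bform_sroot_sroot, cf_self]
  | srefl i u _ ih => rwa [bform_srefl_srefl]

theorem IsRoot.ne_zero (hv : IsRoot M v) : v ≠ 0 := by
  rintro rfl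
  simpa [bform] using hv.bform_self

theorem IsRoot.nonneg_or_nonpos (hs : M.Small) (hv : IsRoot M v) : 0 ≤ v ∨ v ≤ 0 := by
  obtain ⟨w, k, rfl⟩ := hv.exists_geomRep_sroot_eq hs
  by_cases hk : (cs M).IsRightDescent w k
  · right
    rw [CoxeterSystem.isRightDescent_iff_not_isRightDescent_mul] at hk
    have := geomRep_sroot_nonneg hs hk
    rwa [geomRep_mul_simple, srefl_sroot_self, map_neg, neg_nonneg] at this
  · exact .inl (geomRep_sroot_nonneg hs hk)

theorem IsRoot.eq_sroot_of_nonneg (hv : IsRoot M v) (hp : 0 ≤ v) {k : I}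
    (hsupp : ∀ l, l ≠ k → v l = 0) : v = sroot k := by
  have hvk : v = v k • sroot k := by
    ext l
    rcases eq_or_ne l k with rfl | hl
    · simp [sroot]
    · simp [sroot, hl, hsupp l hl]
  have hnorm := hv.bform_self
  rw [hvk, bform_smul_left, bform_smul_right, bform_sroot_sroot, cf_self] at hnorm
  have hk1 : v k = 1 := (mul_self_eq_one_iff.1 (by linarith)).resolve_right fun h => by
    linarith [show (0 : ℝ) ≤ v k from hp k]
  rw [hvk, hk1, one_smul]

theorem IsPos.srefl_of_ne (hs : M.Small) (hv : IsPos M v) {k : I} (hk : v ≠ sroot k) :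
    IsPos M (srefl M k v) := by
  refine ⟨hv.1.srefl k v, ?_⟩
  refine ((hv.1.srefl k v).nonneg_or_nonpos hs).resolve_right fun hneg => hk ?_
  refine hv.1.eq_sroot_of_nonneg hv.2 fun l hl => le_antisymm ?_ (hv.2 l)
  rw [← srefl_apply_of_ne v hl]
  exact hneg l

end Roots

section Depth

variable {I : Type} [Fintype I] [DecidableEq I] {M : CoxM I} {v : I → ℝ}

theorem foldr_srefl_eq_geomRep (hs : M.Small) (ω : List I) (v : I → ℝ) :
    ω.foldr (srefl M) v = geomRep M hs ((cs M).wordProd ω) v := by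
  induction ω with
  | nil => rw [CoxeterSystem.wordProd_nil, map_one, Module.End.one_apply, List.foldr_nil]
  | cons i ω ih => rw [CoxeterSystem.wordProd_cons, geomRep_simple_mul, List.foldr_cons, ih]

theorem dep_le_length (hs : M.Small) {w : M.W} (h : ¬ 0 ≤ geomRep M hs w v) :
    dep M v ≤ (cs M).length w := by
  obtain ⟨ω, hω, rfl⟩ := (cs M).exists_isReduced w
  refine Nat.sInf_le ⟨ω, hω.symm, not_nonneg_iff.1 ?_⟩
  rwa [foldr_srefl_eq_geomRep hs]

theorem nonneg_geomRep_of_length_lt_dep (hs : M.Small) {w : M.W} (h : (cs M).length w < dep M v) :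
    0 ≤ geomRep M hs w v := by
  by_contra hneg
  exact (dep_le_length hs hneg).not_gt h

theorem IsRoot.exists_length_eq_dep (hs : M.Small) (hv : IsRoot M v) :
    ∃ w : M.W, (cs M).length w = dep M v ∧ ¬ 0 ≤ geomRep M hs w v := by
  have hne : {n | ∃ ω : List I, ω.length = n ∧ ∃ k, ω.foldr (LK.srefl M) v k < 0}.Nonempty := by
    obtain ⟨w, k, rfl⟩ := hv.exists_geomRep_sroot_eq hs
    obtain ⟨ω, hω⟩ := (cs M).wordProd_surjective ((cs M).simple k * w⁻¹)
    refine ⟨_, ω, rfl, not_nonneg_iff.1 ?_⟩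
    rw [foldr_srefl_eq_geomRep hs, hω, ← Module.End.mul_apply, ← map_mul, mul_assoc,
      inv_mul_cancel, mul_one, geomRep_simple, srefl_sroot_self]
    exact not_nonneg_neg_sroot k
  obtain ⟨ω, hlen, hneg⟩ := Nat.sInf_mem hne
  rw [foldr_srefl_eq_geomRep hs, ← not_nonneg_iff] at hneg
  refine ⟨_, le_antisymm ?_ (dep_le_length hs hneg), hneg⟩
  exact ((cs M).length_wordProd_le ω).trans_eq hlen

theorem dep_le_dep_srefl_add_one (hs : M.Small) (hv : IsRoot M v) (k : I) :
    dep M v ≤ dep M (srefl M k v) + 1 := by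
  obtain ⟨w, hw, hneg⟩ := (hv.srefl k v).exists_length_eq_dep hs
  calc dep M v ≤ (cs M).length (w * (cs M).simple k) :=
        dep_le_length hs (by rwa [geomRep_mul_simple])
    _ ≤ (cs M).length w + 1 := length_mul_simple_le w k
    _ = dep M (srefl M k v) + 1 := by rw [hw]

theorem IsPos.exists_geomRep_eq_sroot (hs : M.Small) (hv : IsPos M v) :
    ∃ (u : M.W) (m : I), (cs M).length u + 1 = dep M v ∧ geomRep M hs u v = sroot m := by
  obtain ⟨w, hw, hneg⟩ := hv.1.exists_length_eq_dep hs
  have hw1 : w ≠ 1 := by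
    rintro rfl
    rw [map_one, Module.End.one_apply] at hneg
    exact hneg hv.2
  obtain ⟨m, hm⟩ := (cs M).exists_leftDescent_of_ne_one hw1
  obtain ⟨u, rfl⟩ : ∃ u, w = (cs M).simple m * u :=
    ⟨_, (CoxeterSystem.simple_mul_simple_cancel_left _ m).symm⟩
  rw [CoxeterSystem.isLeftDescent_iff, CoxeterSystem.simple_mul_simple_cancel_left] at hm
  refine ⟨u, m, hm.trans hw, by_contra fun hne => hneg ?_⟩
  have hu : IsPos M (geomRep M hs u v) :=
    ⟨hv.1.geomRep_apply hs u, nonneg_geomRep_of_length_lt_dep hs (by omega)⟩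
  rw [geomRep_simple_mul]
  exact (hu.srefl_of_ne hs hne).2

theorem IsPos.dep_srefl_lt (hs : M.Small) (hv : IsPos M v) {k : I}
    (hk : 0 < bform M v (sroot k)) :
    dep M (srefl M k v) < dep M v := by
  -- With `u v = α_m` and `ℓ(u) + 1 = dep v`: if `s_k` is a right descent of `u`, then
  -- `s_m u s_k` sends `s_k v` to `-α_m`; otherwise `u α_k ≥ 0`, and the root
  -- `u (s_k v) = α_m - (v | α_k) u α_k` cannot be `≥ 0`, as it is `≤ 0` off `m` and `≠ α_m`.
  obtain ⟨u, m, hu, hum⟩ := hv.exists_geomRep_eq_sroot hs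
  suffices ∃ x : M.W, (cs M).length x ≤ (cs M).length u ∧ ¬ 0 ≤ geomRep M hs x (srefl M k v) by
    obtain ⟨x, hx, hneg⟩ := this
    have := dep_le_length hs hneg
    omega
  by_cases hdesc : (cs M).IsRightDescent u k
  · refine ⟨(cs M).simple m * (u * (cs M).simple k), ?_, ?_⟩
    · unfold CoxeterSystem.IsRightDescent at hdesc
      rcases (cs M).length_simple_mul (u * (cs M).simple k) m with h | h <;> omega
    · rw [geomRep_simple_mul, geomRep_mul_simple, srefl_srefl, hum, srefl_sroot_self]
      exact not_nonneg_neg_sroot m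
  · refine ⟨u, le_rfl, fun hnn => ?_⟩
    have heq : geomRep M hs u (srefl M k v)
        = sroot m - bform M v (sroot k) • geomRep M hs u (sroot k) := by
      rw [srefl_def, map_sub, map_smul, hum]
    have hm := ((hv.1.srefl k v).geomRep_apply hs u).eq_sroot_of_nonneg hnn (k := m)
      fun l hl => le_antisymm ?_ (hnn l)
    · rw [heq, sub_eq_self, smul_eq_zero] at hm
      exact hm.elim hk.ne' ((IsRoot.simple k).geomRep_apply hs u).ne_zero
    · have hδ : 0 ≤ geomRep M hs u (sroot k) l := geomRep_sroot_nonneg hs hdesc l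
      rw [heq, Pi.sub_apply, Pi.smul_apply, smul_eq_mul, sroot, Pi.single_eq_of_ne hl, zero_sub,
        neg_nonpos]
      exact mul_nonneg hk.le hδ

theorem IsPos.dep_srefl_add_one (hs : M.Small) (hv : IsPos M v) {k : I}
    (hk : 0 < bform M v (sroot k)) :
    dep M (srefl M k v) + 1 = dep M v := by
  have := hv.dep_srefl_lt hs hk
  have := dep_le_dep_srefl_add_one hs hv.1 k
  omega

theorem IsPos.exists_bform_sroot_pos (hv : IsPos M v) : ∃ k, 0 < bform M v (sroot k) := by
  by_contra! h
  have hsum : bform M v v ≤ 0 := by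
    rw [bform_eq_sum_bform_sroot]
    exact Finset.sum_nonpos fun k _ => mul_nonpos_of_nonneg_of_nonpos (hv.2 k) (h k)
  linarith [hv.1.bform_self]

end Depth

section RankThree

variable {I : Type} [Fintype I] [DecidableEq I] {M : CoxM I}

theorem IsPos.bform_triangle_nonpos (hs : M.Small) {i j k : I} (hij : M.m i j = 3)
    (hik : M.m i k = 3) (hjk : M.m j k = 3) {v : I → ℝ} (hv : IsPos M v) :
    bform M v (sroot i + sroot j + sroot k) ≤ 0 := by
  by_contra! hpos
  -- `α_i + α_j + α_k` is orthogonal to `α_i, α_j, α_k`, so `s_i, s_j, s_k` preserve the pairing.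
  have hδ : ∀ x, x = i ∨ x = j ∨ x = k → bform M (sroot x) (sroot i + sroot j + sroot k) = 0 := by
    have hji := (M.symm i j).symm.trans hij
    have hki := (M.symm i k).symm.trans hik
    have hkj := (M.symm j k).symm.trans hjk
    rintro x (rfl | rfl | rfl) <;>
      simp only [bform_add_right, bform_sroot_sroot, cf_self, cf_of_m_eq_three hij,
        cf_of_m_eq_three hik, cf_of_m_eq_three hjk, cf_of_m_eq_three hji, cf_of_m_eq_three hki,
        cf_of_m_eq_three hkj] <;> norm_num
  obtain ⟨x, hx, hvx⟩ : ∃ x, (x = i ∨ x = j ∨ x = k) ∧ 0 < bform M v (sroot x) := by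
    rw [bform_add_right, bform_add_right] at hpos
    by_contra! h
    linarith [h i (.inl rfl), h j (.inr (.inl rfl)), h k (.inr (.inr rfl))]
  by_cases hvx' : v = sroot x
  · rw [hvx', hδ x hx] at hpos
    exact hpos.false
  · have hlt := hv.dep_srefl_lt hs hvx
    have := (hv.srefl_of_ne hs hvx').bform_triangle_nonpos hs hij hik hjk
    rw [bform_srefl_left, hδ x hx, mul_zero, sub_zero] at this
    exact this.not_gt hpos
termination_by dep M v

theorem bform_hexagon {i j k : I} (hij : M.m i j = 3) (hik : M.m i k = 3) (hjk : M.m j k = 2)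
    {v : I → ℝ} (hi : bform M v (sroot i) = 0) (hj : bform M v (sroot j) = 0) :
    bform M (srefl M k v) (sroot i) = bform M v (sroot k) ∧
    bform M (srefl M k v) (sroot j) = 0 ∧
    bform M (srefl M i (srefl M k v)) (sroot i) = -bform M v (sroot k) ∧
    bform M (srefl M i (srefl M k v)) (sroot j) = bform M v (sroot k) ∧
    bform M (srefl M j (srefl M i (srefl M k v))) (sroot i) = 0 ∧
    bform M (srefl M j (srefl M i (srefl M k v))) (sroot k) = 0 := by
  have hji := (M.symm i j).symm.trans hij
  have hki := (M.symm i k).symm.trans hik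
  have hkj := (M.symm j k).symm.trans hjk
  refine ⟨?_, ?_, ?_, ?_, ?_, ?_⟩ <;>
    simp only [bform_srefl_left, bform_sroot_sroot, cf_self, hi, hj, cf_of_m_eq_three hij,
      cf_of_m_eq_three hji, cf_of_m_eq_three hik, cf_of_m_eq_three hki, cf_of_m_eq_two hjk,
      cf_of_m_eq_two hkj] <;>
    ring

end RankThree

section Relations

variable {I : Type} [Fintype I] [DecidableEq I] {M : CoxM I} {R : Type} [CommRing R]

structure LKRelations (M : CoxM I) (R : Type) [CommRing R] (a b c d : R)
    (f : I → (VV M R →ₗ[R] R)) : Prop where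
  rel1 : ∀ i j : I, i ≠ j → f i (ev M R (simplePos M j)) = 0
  rel6 : ∀ i j : I, M.m i j = 2 → ∀ aa bb : Pos M,
    aa.1 = srefl M j bb.1 → dep M aa.1 = dep M bb.1 + 1 →
    d * f i (ev M R aa) = b * f i (ev M R bb)
  rel8 : ∀ i j : I, M.m i j = 3 → ∀ gg bb aa : Pos M,
    bb.1 = srefl M i gg.1 → aa.1 = srefl M j bb.1 →
    dep M gg.1 < dep M bb.1 → dep M bb.1 < dep M aa.1 →
    c * f i (ev M R aa) = b * f j (ev M R gg) - a * f i (ev M R bb)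
  rel10 : ∀ i j : I, M.m i j = 3 → ∀ gg bb aa : Pos M,
    bb.1 = srefl M j gg.1 → aa.1 = srefl M i bb.1 →
    srefl M i gg.1 = gg.1 → srefl M j aa.1 = aa.1 →
    dep M gg.1 < dep M bb.1 → dep M bb.1 < dep M aa.1 →
    d * f i (ev M R aa) = b * f j (ev M R bb)

variable {a b c d : R} {f : I → (VV M R →ₗ[R] R)}

namespace LKRelations

theorem eq_of_m_eq_two_of_m_eq_two (hF : LKRelations M R a b c d f) (hd : IsUnit d)
    {i j k : I} (hik : M.m i k = 2) (hjk : M.m j k = 2) {α β : Pos M}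
    (hαβ : α.1 = srefl M k β.1) (hdep : dep M α.1 = dep M β.1 + 1)
    (hβ : f i (ev M R β) = f j (ev M R β)) :
    f i (ev M R α) = f j (ev M R α) :=
  hd.mul_left_cancel <| by rw [hF.rel6 i k hik α β hαβ hdep, hF.rel6 j k hjk α β hαβ hdep, hβ]

theorem eq_of_hexagon (hF : LKRelations M R a b c d f) (hc : IsUnit c) (hd : IsUnit d)
    {i j k : I} (hij : M.m i j = 3) (hik : M.m i k = 3) (hjk : M.m j k = 2) {α β γ δ : Pos M}
    (hαβ : α.1 = srefl M k β.1) (hβγ : β.1 = srefl M i γ.1) (hγδ : γ.1 = srefl M j δ.1)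
    (hdα : dep M α.1 = dep M β.1 + 1) (hdβ : dep M β.1 = dep M γ.1 + 1)
    (hdγ : dep M γ.1 = dep M δ.1 + 1)
    (hβj : srefl M j β.1 = β.1) (hδi : srefl M i δ.1 = δ.1)
    (hδ : f i (ev M R δ) = f k (ev M R δ)) :
    f i (ev M R α) = f j (ev M R α) := by
  have hji : M.m j i = 3 := (M.symm i j).symm.trans hij
  have hkj : M.m k j = 2 := (M.symm j k).symm.trans hjk
  have relα := hF.rel6 j k hjk α β hαβ hdα
  have relαi := hF.rel8 i k hik γ β α hβγ hαβ (by omega) (by omega)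
  have relβi := hF.rel10 i j hij δ γ β hγδ hβγ hδi hβj (by omega) (by omega)
  have relβj := hF.rel8 j i hji δ γ β hγδ hβγ (by omega) (by omega)
  have relγ := hF.rel6 k j hkj γ δ hγδ hdγ
  refine (hc.mul hd).mul_left_cancel ?_
  calc c * d * f i (ev M R α)
      = d * (b * f k (ev M R γ)) - a * (d * f i (ev M R β)) := by
        linear_combination d * relαi
    _ = b * (b * f i (ev M R δ) - a * f j (ev M R γ)) := by
        linear_combination b * relγ - a * relβi - b * b * hδ
    _ = c * d * f j (ev M R α) := by linear_combination -b * relβj - c * relα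

theorem eq_of_m_eq_three_of_m_eq_two (hF : LKRelations M R a b c d f) (hs : M.Small)
    (hc : IsUnit c) (hd : IsUnit d) {i j k : I} (hij : M.m i j = 3) (hik : M.m i k = 3)
    (hjk : M.m j k = 2) {α : Pos M} (hi : bform M α.1 (sroot i) = 0)
    (hj : bform M α.1 (sroot j) = 0) (hk : 0 < bform M α.1 (sroot k))
    (ih : ∀ δ : Pos M, dep M δ.1 < dep M α.1 → srefl M i δ.1 = δ.1 → srefl M k δ.1 = δ.1 →
      f i (ev M R δ) = f k (ev M R δ)) :
    f i (ev M R α) = f j (ev M R α) := by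
  obtain ⟨bβi, bβj, bγi, bγj, bδi, bδk⟩ := bform_hexagon hij hik hjk hi hj
  have hαk : α.1 ≠ sroot k := fun h => by
    rw [h, bform_sroot_sroot, cf_comm, cf_of_m_eq_three hik] at hi; norm_num at hi
  let β : Pos M := ⟨srefl M k α.1, α.2.srefl_of_ne hs hαk⟩
  have hβi : srefl M k α.1 ≠ sroot i := fun h => by
    rw [h, bform_sroot_sroot, cf_of_m_eq_three hij] at bβj; norm_num at bβj
  let γ : Pos M := ⟨srefl M i β.1, β.2.srefl_of_ne hs hβi⟩
  have hγj : srefl M i (srefl M k α.1) ≠ sroot j := fun h => by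
    rw [h, bform_sroot_sroot, cf_comm, cf_of_m_eq_three hij] at bγi
    rw [h, bform_sroot_sroot, cf_self] at bγj
    linarith
  let δ : Pos M := ⟨srefl M j γ.1, γ.2.srefl_of_ne hs hγj⟩
  have hdα : dep M β.1 + 1 = dep M α.1 := α.2.dep_srefl_add_one hs hk
  have hdβ : dep M γ.1 + 1 = dep M β.1 := β.2.dep_srefl_add_one hs (bβi ▸ hk)
  have hdγ : dep M δ.1 + 1 = dep M γ.1 := γ.2.dep_srefl_add_one hs (bγj ▸ hk)
  have hδi : srefl M i δ.1 = δ.1 := srefl_eq_self_iff.2 bδi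
  exact hF.eq_of_hexagon hc hd hij hik hjk (β := β) (γ := γ) (δ := δ)
    (srefl_srefl k α.1).symm (srefl_srefl i β.1).symm (srefl_srefl j γ.1).symm
    hdα.symm hdβ.symm hdγ.symm (srefl_eq_self_iff.2 bβj) hδi
    (ih δ (by omega) hδi (srefl_eq_self_iff.2 bδk))

theorem rel5 (hF : LKRelations M R a b c d f) (hs : M.Small) (hc : IsUnit c) (hd : IsUnit d)
    {i j : I} (hij : M.m i j = 3) (α : Pos M) (hi : srefl M i α.1 = α.1)
    (hj : srefl M j α.1 = α.1) : f i (ev M R α) = f j (ev M R α) := by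
  rw [srefl_eq_self_iff] at hi hj
  obtain ⟨k, hk⟩ := α.2.exists_bform_sroot_pos
  have hik : i ≠ k := by rintro rfl; exact hk.ne' hi
  have hjk : j ≠ k := by rintro rfl; exact hk.ne' hj
  by_cases hαk : α.1 = sroot k
  · obtain rfl : α = simplePos M k := Subtype.ext hαk
    rw [hF.rel1 i k hik, hF.rel1 j k hjk]
  rcases M.m_eq_two_or_three hs hik with hik' | hik' <;>
    rcases M.m_eq_two_or_three hs hjk with hjk' | hjk'
  · let β : Pos M := ⟨srefl M k α.1, α.2.srefl_of_ne hs hαk⟩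
    have hdα : dep M β.1 + 1 = dep M α.1 := α.2.dep_srefl_add_one hs hk
    have hlt : dep M β.1 < dep M α.1 := by omega
    have hβ : ∀ x, M.m x k = 2 → bform M α.1 (sroot x) = 0 → srefl M x β.1 = β.1 :=
      fun x hx hαx => srefl_eq_self_iff.2 <| by
        simp only [β, bform_srefl_left, bform_sroot_sroot, hαx, cf_comm k x, cf_of_m_eq_two hx]
        ring
    exact hF.eq_of_m_eq_two_of_m_eq_two hd hik' hjk' (srefl_srefl k α.1).symm hdα.symm
      (hF.rel5 hs hc hd hij β (hβ i hik' hi) (hβ j hjk' hj))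
  · exact (hF.eq_of_m_eq_three_of_m_eq_two hs hc hd ((M.symm i j).symm.trans hij) hjk' hik'
      hj hi hk fun δ _ hδj hδk => hF.rel5 hs hc hd hjk' δ hδj hδk).symm
  · exact hF.eq_of_m_eq_three_of_m_eq_two hs hc hd hij hik' hjk' hi hj hk
      fun δ _ hδi hδk => hF.rel5 hs hc hd hik' δ hδi hδk
  · have := α.2.bform_triangle_nonpos hs hij hik' hjk'
    rw [bform_add_right, bform_add_right, hi, hj] at this
    linarith
termination_by dep M α.1

end LKRelations

end Relations

end LK

open LK in
theorem statement_9_general {I : Type} [Fintype I] [DecidableEq I] (M : CoxM I) (hsmall : M.Small)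
    (R : Type) [CommRing R] (b c d : R) (hc : IsUnit c) (hd : IsUnit d)
    (a : R)
    (f : I → (VV M R →ₗ[R] R))
    (rel1 : ∀ i j : I, i ≠ j → f i (ev M R (simplePos M j)) = 0)
    (rel6 : ∀ i j : I, M.m i j = 2 → ∀ aa bb : Pos M,
      aa.1 = srefl M j bb.1 → dep M aa.1 = dep M bb.1 + 1 →
      d * f i (ev M R aa) = b * f i (ev M R bb))
    (rel8 : ∀ i j : I, M.m i j = 3 → ∀ gg bb aa : Pos M,
      bb.1 = srefl M i gg.1 → aa.1 = srefl M j bb.1 →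
      dep M gg.1 < dep M bb.1 → dep M bb.1 < dep M aa.1 →
      c * f i (ev M R aa) = b * f j (ev M R gg) - a * f i (ev M R bb))
    (rel10 : ∀ i j : I, M.m i j = 3 → ∀ gg bb aa : Pos M,
      bb.1 = srefl M j gg.1 → aa.1 = srefl M i bb.1 →
      srefl M i gg.1 = gg.1 → srefl M j aa.1 = aa.1 →
      dep M gg.1 < dep M bb.1 → dep M bb.1 < dep M aa.1 →
      d * f i (ev M R aa) = b * f j (ev M R bb)) :
    ∀ i j : I, M.m i j = 3 → ∀ aa : Pos M,
      srefl M i aa.1 = aa.1 → srefl M j aa.1 = aa.1 →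
      f i (ev M R aa) = f j (ev M R aa) :=
  fun _ _ hij α hi hj => LKRelations.rel5 ⟨rel1, rel6, rel8, rel10⟩ hsmall hc hd hij α hi hj

open LK in
/-- relation (5) follows from relations (1), (6), (8) and (10). -/
theorem statement_9 {I : Type} [Fintype I] [DecidableEq I] (M : CoxM I) (hsmall : M.Small)
    (R : Type) [CommRing R] (b c d : R) (hb : IsUnit b) (hc : IsUnit c) (hd : IsUnit d)
    (a : R) (ha : a = d - b * c * Ring.inverse d)
    (f : I → (VV M R →ₗ[R] R))
    (rel1 : ∀ i j : I, i ≠ j → f i (ev M R (simplePos M j)) = 0)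
    (rel6 : ∀ i j : I, M.m i j = 2 → ∀ aa bb : Pos M,
      aa.1 = srefl M j bb.1 → dep M aa.1 = dep M bb.1 + 1 →
      d * f i (ev M R aa) = b * f i (ev M R bb))
    (rel8 : ∀ i j : I, M.m i j = 3 → ∀ gg bb aa : Pos M,
      bb.1 = srefl M i gg.1 → aa.1 = srefl M j bb.1 →
      dep M gg.1 < dep M bb.1 → dep M bb.1 < dep M aa.1 →
      c * f i (ev M R aa) = b * f j (ev M R gg) - a * f i (ev M R bb))
    (rel10 : ∀ i j : I, M.m i j = 3 → ∀ gg bb aa : Pos M,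
      bb.1 = srefl M j gg.1 → aa.1 = srefl M i bb.1 →
      srefl M i gg.1 = gg.1 → srefl M j aa.1 = aa.1 →
      dep M gg.1 < dep M bb.1 → dep M bb.1 < dep M aa.1 →
      d * f i (ev M R aa) = b * f j (ev M R bb)) :
    ∀ i j : I, M.m i j = 3 → ∀ aa : Pos M,
      srefl M i aa.1 = aa.1 → srefl M j aa.1 = aa.1 →
      f i (ev M R aa) = f j (ev M R aa) :=
  statement_9_general M hsmall R b c d hc hd a f rel1 rel6 rel8 rel10
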